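/- arXiv:alg-geom/9712034 — 2 statements merged into one kernel-verified Lean document; each statement's English description precedes it below -/
import Mathlib

section
/- For every integer d ≥ 1 and every integer m ≥ 0, the identity Σ_{K ∈ S_d(m)} (dm)! / (∏_{i,j=1}^{d} k_{ij}!) = ((dm)!)^2 / (m!)^{2d} holds in the rational numbers; that is, the m-th coefficient of the period Ψ_F(z) obtained from the generalized mirror construction for a complete intersection of two hypersurfaces of degree d in P^{2d-1} equals the m-th coefficient ((dm)!)^2/(m!)^{2d} of the hypergeometric series Φ_0(z) associated to that complete intersection. -/
/-!
Each row of `K ∈ S_d(m)` sums to `m`, so `(dm)! / ∏ k_{ij}!` is `(dm)! / (m!)^d` times the product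
of the row multinomials `m! / ∏_j k_{ij}!`. Extracting the coefficient of `x_1^m ⋯ x_d^m` from
`(x_1 + ⋯ + x_d)^{dm} = ∏_{i=1}^{d} (x_1 + ⋯ + x_d)^m` shows that these products sum, over all
`K` with row and column sums `m`, to the multinomial coefficient `(dm)! / (m!)^d`.
-/

open Finset MvPolynomial
open scoped Nat

namespace MvPolynomial

variable {R σ : Type*} [CommSemiring R] [Fintype σ]

lemma coeff_equivFunOnFinite_sum_X_pow (k : σ → ℕ) (n : ℕ) :
    coeff (Finsupp.equivFunOnFinite.symm k) ((∑ j, X j : MvPolynomial σ R) ^ n) =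
      if ∑ j, k j = n then (Nat.multinomial univ k : R) else 0 := by
  rw [coeff_sum_X_pow_of_fintype, Finsupp.sum_fintype _ _ fun _ => rfl,
    Finsupp.multinomial_eq_of_support_subset (subset_univ _)]
  simp [apply_ite (Nat.cast : ℕ → R)]

lemma coeff_equivFunOnFinite_prod_X_pow [DecidableEq σ] (c k : σ → ℕ) :
    coeff (Finsupp.equivFunOnFinite.symm c) (∏ j, (X j : MvPolynomial σ R) ^ k j) =
      if c = k then 1 else 0 := by
  rw [coeff_prod_X_pow]
  congr 1
  simp [Finsupp.ext_iff, ← _root_.funext_iff]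

end MvPolynomial

section ContingencyTables

variable {ι κ : Type*} [Fintype ι] [Fintype κ] [DecidableEq ι] [DecidableEq κ]

def contingencyTables (r : ι → ℕ) (c : κ → ℕ) : Finset (ι → κ → ℕ) :=
  {K ∈ Fintype.piFinset fun i => piAntidiag univ (r i) | ∀ j, ∑ i, K i j = c j}

lemma mem_contingencyTables {r : ι → ℕ} {c : κ → ℕ} {K : ι → κ → ℕ} :
    K ∈ contingencyTables r c ↔ (∀ i, ∑ j, K i j = r i) ∧ ∀ j, ∑ i, K i j = c j := by
  simp [contingencyTables, mem_piAntidiag]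

theorem Nat.sum_contingencyTables_prod_multinomial (r : ι → ℕ) (c : κ → ℕ)
    (h : ∑ i, r i = ∑ j, c j) :
    ∑ K ∈ contingencyTables r c, ∏ i, Nat.multinomial univ (K i) = Nat.multinomial univ c := by
  let x : κ →₀ ℕ := Finsupp.equivFunOnFinite.symm c
  calc ∑ K ∈ contingencyTables r c, ∏ i, Nat.multinomial univ (K i)
      = ∑ K ∈ Fintype.piFinset fun i => piAntidiag univ (r i),
          (∏ i, Nat.multinomial univ (K i)) * if c = fun j => ∑ i, K i j then 1 else 0 := by
        simp [contingencyTables, sum_filter, funext_iff, eq_comm]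
    _ = coeff x (∑ K ∈ Fintype.piFinset fun i => piAntidiag univ (r i),
          ∏ i, ((Nat.multinomial univ (K i) : MvPolynomial κ ℕ) * ∏ j, X j ^ K i j)) := by
        rw [coeff_sum]
        refine sum_congr rfl fun K _ => ?_
        rw [prod_mul_distrib, prod_comm (s := univ) (t := univ)]
        simp_rw [prod_pow_eq_pow_sum]
        rw [← Nat.cast_prod, ← C_eq_coe_nat, coeff_C_mul, coeff_equivFunOnFinite_prod_X_pow]
        rfl
    _ = coeff x ((∑ j, X j : MvPolynomial κ ℕ) ^ ∑ i, r i) := by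
        rw [← prod_pow_eq_pow_sum]
        simp_rw [sum_pow_eq_sum_piAntidiag, prod_univ_sum]
    _ = Nat.multinomial univ c := by
        rw [coeff_equivFunOnFinite_sum_X_pow, if_pos h.symm, Nat.cast_id]

end ContingencyTables

lemma Nat.cast_multinomial {𝕜 α : Type*} [Field 𝕜] [CharZero 𝕜] (s : Finset α) (f : α → ℕ) :
    (Nat.multinomial s f : 𝕜) = (∑ i ∈ s, f i)! / ∏ i ∈ s, ((f i)! : 𝕜) := by
  rw [eq_div_iff (prod_ne_zero_iff.2 fun i _ => Nat.cast_ne_zero.2 (Nat.factorial_ne_zero _)),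
    mul_comm]
  exact_mod_cast Nat.multinomial_spec s f

theorem statement1_general (d m : ℕ)
    (S : Finset (Fin d → Fin d → ℕ))
    (hS : ∀ K : Fin d → Fin d → ℕ,
      K ∈ S ↔ ((∀ i, ∑ j, K i j = m) ∧ (∀ j, ∑ i, K i j = m))) :
    ∑ K ∈ S, ((d * m).factorial : ℚ) / ∏ i : Fin d, ∏ j : Fin d, ((K i j).factorial : ℚ)
      = ((d * m).factorial : ℚ) ^ 2 / (m.factorial : ℚ) ^ (2 * d) := by
  have hS' : S = contingencyTables (fun _ => m) (fun _ => m) := by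
    ext K
    rw [hS, mem_contingencyTables]
  have hconst : (Nat.multinomial univ fun _ : Fin d => m : ℚ) = (d * m)! / (m ! : ℚ) ^ d := by
    simp [Nat.cast_multinomial]
  have hterm : ∀ K ∈ S, ((d * m)! : ℚ) / ∏ i, ∏ j, ((K i j)! : ℚ)
      = (d * m)! / (m ! : ℚ) ^ d * ∏ i, (Nat.multinomial univ (K i) : ℚ) := by
    intro K hK
    simp only [Nat.cast_multinomial, ((hS K).1 hK).1, prod_div_distrib, prod_const, card_univ,
      Fintype.card_fin]
    rw [div_mul_div_cancel₀ (by positivity)]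
  calc ∑ K ∈ S, ((d * m)! : ℚ) / ∏ i, ∏ j, ((K i j)! : ℚ)
      = (d * m)! / (m ! : ℚ) ^ d * ∑ K ∈ S, ∏ i, (Nat.multinomial univ (K i) : ℚ) := by
        rw [mul_sum]
        exact sum_congr rfl hterm
    _ = (d * m)! / (m ! : ℚ) ^ d * Nat.multinomial univ fun _ : Fin d => m := by
        rw [hS']
        congr 1
        exact_mod_cast Nat.sum_contingencyTables_prod_multinomial _ _ rfl
    _ = ((d * m)! : ℚ) ^ 2 / (m ! : ℚ) ^ (2 * d) := by
        rw [hconst]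
        ring

/-- For integers `d ≥ 1` and `m ≥ 0`, summing over the set `S_d(m)` of all
`d × d` matrices with nonnegative integer entries whose row sums and column sums all equal `m`,
one has `Σ_{K ∈ S_d(m)} (dm)! / ∏_{i,j} k_{ij}! = ((dm)!)^2 / (m!)^{2d}` in `ℚ`: the `m`-th
coefficient of the period `Ψ_F(z)` of the generalized mirror construction for a complete
intersection of two degree-`d` hypersurfaces in `ℙ^{2d-1}` equals the `m`-th coefficient
`((dm)!)^2 / (m!)^{2d}` of the hypergeometric series `Φ_0(z)`. -/
theorem statement1 (d m : ℕ) (hd : 1 ≤ d)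
    (S : Finset (Fin d → Fin d → ℕ))
    (hS : ∀ K : Fin d → Fin d → ℕ,
      K ∈ S ↔ ((∀ i, ∑ j, K i j = m) ∧ (∀ j, ∑ i, K i j = m))) :
    ∑ K ∈ S, ((d * m).factorial : ℚ) / ∏ i : Fin d, ∏ j : Fin d, ((K i j).factorial : ℚ)
      = ((d * m).factorial : ℚ) ^ 2 / (m.factorial : ℚ) ^ (2 * d) :=
  statement1_general d m S hS
end

section
/- Let d ≥ 2. The subgroup N of ℤ^{2(d−1)} generated by the d^2 vectors h_{i,j} (i, j ∈ {1,…,d}) is exactly the set of vectors x = Σ_{i=1}^{d−1} a_i e_i + Σ_{j=1}^{d−1} b_j f_j with integer coordinates satisfying Σ_{i=1}^{d−1} a_i ≡ Σ_{j=1}^{d−1} b_j (mod d); in particular, N is a subgroup of index d in ℤ^{2(d−1)} (for d = 2 this is the index-2 sublattice {(a,b) : a + b even} of ℤ^2). -/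
/-!
The functional `S(x) = Σ aᵢ − Σ bⱼ` sends every `e_i` to `1` and every `f_j` to `−1` modulo `d`
(`S(e_d) = 1 − d`, `S(f_d) = d − 1`), so it vanishes modulo `d` on `N`. Conversely, modulo `N`
one has `e_i ≡ e_z` (as `h_{i,z} − h_{z,z}`) and `f_j ≡ −e_z` (as `h_{z,j}`), hence `x ≡ S(x) e_z`
for every `x`; and `h_{z,d}` gives `d e_z ≡ 0`. Thus `N` is the preimage of `dℤ` under the
surjection `S : ℤ^{2(d−1)} → ℤ`, which has index `d`.
-/

/-- The vector `e_i ∈ ℤ^{2(d−1)}` (coordinates indexed by `Fin (d−1) ⊕ Fin (d−1)`): for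
`i < d − 1` it is the `i`-th standard basis vector of the first block, and
`e_d = −(e_1 + ⋯ + e_{d−1})`. -/
def eVec (d : ℕ) (i : Fin d) : (Fin (d - 1) ⊕ Fin (d - 1)) → ℤ :=
  if h : (i : ℕ) < d - 1 then Pi.single (Sum.inl ⟨i, h⟩) 1
  else -∑ i' : Fin (d - 1), Pi.single (Sum.inl i') 1

/-- The vector `f_j ∈ ℤ^{2(d−1)}`: for `j < d − 1` it is the `j`-th standard basis vector of
the second block, and `f_d = −(f_1 + ⋯ + f_{d−1})`. -/
def fVec (d : ℕ) (j : Fin d) : (Fin (d - 1) ⊕ Fin (d - 1)) → ℤ :=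
  if h : (j : ℕ) < d - 1 then Pi.single (Sum.inr ⟨j, h⟩) 1
  else -∑ j' : Fin (d - 1), Pi.single (Sum.inr j') 1

/-- `h_{i,j} := e_i + f_j`. -/
def hVec (d : ℕ) (i j : Fin d) : (Fin (d - 1) ⊕ Fin (d - 1)) → ℤ :=
  eVec d i + fVec d j

open Finset

section BlockSumDiff

variable {ι κ : Type*} [Fintype ι] [Fintype κ]

def blockSumDiff : ((ι ⊕ κ) → ℤ) →+ ℤ where
  toFun x := ∑ i, x (Sum.inl i) - ∑ j, x (Sum.inr j)
  map_zero' := by simp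
  map_add' x y := by simp only [Pi.add_apply, sum_add_distrib]; ring

lemma blockSumDiff_apply (x : (ι ⊕ κ) → ℤ) :
    blockSumDiff x = ∑ i, x (Sum.inl i) - ∑ j, x (Sum.inr j) := rfl

variable [DecidableEq ι] [DecidableEq κ]

@[simp]
lemma blockSumDiff_single_inl (i : ι) (a : ℤ) :
    blockSumDiff (Pi.single (Sum.inl i) a : (ι ⊕ κ) → ℤ) = a := by
  simp [blockSumDiff_apply, Pi.single_apply]

@[simp]
lemma blockSumDiff_single_inr (j : κ) (a : ℤ) :
    blockSumDiff (Pi.single (Sum.inr j) a : (ι ⊕ κ) → ℤ) = -a := by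
  simp [blockSumDiff_apply, Pi.single_apply]

lemma blockSumDiff_surjective [Nonempty ι] :
    Function.Surjective (blockSumDiff : ((ι ⊕ κ) → ℤ) →+ ℤ) := fun a =>
  ⟨Pi.single (Sum.inl (Classical.arbitrary ι)) a, blockSumDiff_single_inl _ a⟩

end BlockSumDiff

lemma sub_smul_mem_of_forall_single {σ : Type*} [Fintype σ] [DecidableEq σ]
    (f : (σ → ℤ) →+ ℤ) (e : σ → ℤ) {M : AddSubgroup (σ → ℤ)}
    (h : ∀ s, Pi.single s 1 - f (Pi.single s 1) • e ∈ M) (x : σ → ℤ) :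
    x - f x • e ∈ M := by
  set ψ := AddMonoidHom.id (σ → ℤ) - (zmultiplesHom (σ → ℤ) e).comp f
  change ψ x ∈ M
  induction x using Pi.single_induction with
  | zero => simp
  | add x y hx hy => rw [map_add]; exact add_mem hx hy
  | single s m =>
    rw [← mul_one m, ← smul_eq_mul, Pi.single_smul, map_zsmul]
    exact zsmul_mem (h s) m

section HVec

variable {d : ℕ}

lemma eVec_castLE (i : Fin (d - 1)) :
    eVec d (Fin.castLE (Nat.sub_le d 1) i) = Pi.single (Sum.inl i) 1 := by
  simp [eVec, i.isLt]

lemma fVec_castLE (j : Fin (d - 1)) :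
    fVec d (Fin.castLE (Nat.sub_le d 1) j) = Pi.single (Sum.inr j) 1 := by
  simp [fVec, j.isLt]

lemma blockSumDiff_eVec (i : Fin d) :
    blockSumDiff (eVec d i) = if (i : ℕ) < d - 1 then 1 else 1 - (d : ℤ) := by
  unfold eVec
  split_ifs with h
  · simp
  · simp only [map_neg, map_sum, blockSumDiff_single_inl, sum_const, card_univ,
      Fintype.card_fin, Int.nsmul_eq_mul, mul_one]
    omega

lemma blockSumDiff_fVec (j : Fin d) :
    blockSumDiff (fVec d j) = if (j : ℕ) < d - 1 then -1 else (d : ℤ) - 1 := by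
  unfold fVec
  split_ifs with h
  · simp
  · simp only [map_neg, map_sum, blockSumDiff_single_inr, sum_neg_distrib, sum_const,
      card_univ, Fintype.card_fin, Int.nsmul_eq_mul, mul_one, neg_neg]
    omega

lemma dvd_blockSumDiff_hVec (i j : Fin d) : (d : ℤ) ∣ blockSumDiff (hVec d i j) := by
  rw [hVec, map_add, blockSumDiff_eVec, blockSumDiff_fVec]
  split_ifs
  · simp
  · exact ⟨1, by ring⟩
  · exact ⟨-1, by ring⟩
  · simp

end HVec

def hLattice (d : ℕ) : AddSubgroup ((Fin (d - 1) ⊕ Fin (d - 1)) → ℤ) :=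
  AddSubgroup.closure (Set.range fun p : Fin d × Fin d => hVec d p.1 p.2)

namespace hLattice

variable {d : ℕ}

lemma hVec_mem (i j : Fin d) : hVec d i j ∈ hLattice d :=
  AddSubgroup.subset_closure ⟨(i, j), rfl⟩

lemma le_comap_zmultiples :
    hLattice d ≤ (AddSubgroup.zmultiples (d : ℤ)).comap blockSumDiff := by
  rw [hLattice, AddSubgroup.closure_le]
  rintro _ ⟨⟨i, j⟩, rfl⟩
  exact Int.mem_zmultiples_iff.mpr (dvd_blockSumDiff_hVec i j)

lemma sub_blockSumDiff_smul_mem (z : Fin (d - 1)) (x : (Fin (d - 1) ⊕ Fin (d - 1)) → ℤ) :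
    x - blockSumDiff x • Pi.single (Sum.inl z) 1 ∈ hLattice d := by
  set c := Fin.castLE (Nat.sub_le d 1)
  refine sub_smul_mem_of_forall_single _ _ (fun s => ?_) x
  rcases s with i | j
  · have h := sub_mem (hVec_mem (c i) (c z)) (hVec_mem (c z) (c z))
    simpa [hVec, eVec_castLE, fVec_castLE, c] using h
  · simpa [hVec, eVec_castLE, fVec_castLE, c, add_comm] using hVec_mem (c z) (c j)

lemma natCast_smul_single_mem (z : Fin (d - 1)) :
    (d : ℤ) • Pi.single (Sum.inl z) 1 ∈ hLattice d := by
  have hlast : d - 1 < d := by have := z.isLt; omega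
  set v := hVec d (Fin.castLE (Nat.sub_le d 1) z) ⟨d - 1, hlast⟩ with hv
  have hsum : blockSumDiff v = d := by
    simp [hv, hVec, blockSumDiff_eVec, blockSumDiff_fVec, z.isLt]
  have := sub_mem (hVec_mem _ _ : v ∈ hLattice d) (sub_blockSumDiff_smul_mem z v)
  rwa [sub_sub_cancel, hsum] at this

lemma eq_comap_zmultiples (hd : 2 ≤ d) :
    hLattice d = (AddSubgroup.zmultiples (d : ℤ)).comap blockSumDiff := by
  refine le_antisymm le_comap_zmultiples fun x hx => ?_
  obtain ⟨k, hk⟩ := Int.mem_zmultiples_iff.mp hx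
  set z : Fin (d - 1) := ⟨0, by omega⟩
  have hdecomp : x = (x - blockSumDiff x • Pi.single (Sum.inl z) 1)
      + k • ((d : ℤ) • Pi.single (Sum.inl z) 1) := by
    rw [hk, smul_smul, mul_comm, sub_add_cancel]
  rw [hdecomp]
  exact add_mem (sub_blockSumDiff_smul_mem z x) (zsmul_mem (natCast_smul_single_mem z) k)

end hLattice

/-- For `d ≥ 2`, the subgroup `N` of `ℤ^{2(d−1)}` generated by the `d²`
vectors `h_{i,j}` is exactly the set of vectors whose first-block coordinate sum is congruent
to the second-block coordinate sum modulo `d`; in particular `N` has index `d` in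
`ℤ^{2(d−1)}`. -/
theorem statement7 (d : ℕ) (hd : 2 ≤ d)
    (N : AddSubgroup ((Fin (d - 1) ⊕ Fin (d - 1)) → ℤ))
    (hN : N = AddSubgroup.closure (Set.range fun p : Fin d × Fin d => hVec d p.1 p.2)) :
    (∀ x : (Fin (d - 1) ⊕ Fin (d - 1)) → ℤ,
      x ∈ N ↔ (d : ℤ) ∣
        ((∑ i : Fin (d - 1), x (Sum.inl i)) - ∑ j : Fin (d - 1), x (Sum.inr j))) ∧
    N.index = d := by
  have hN : N = (AddSubgroup.zmultiples (d : ℤ)).comap blockSumDiff :=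
    hN.trans (hLattice.eq_comap_zmultiples hd)
  have : Nonempty (Fin (d - 1)) := ⟨⟨0, by omega⟩⟩
  subst hN
  refine ⟨fun x => Int.mem_zmultiples_iff, ?_⟩
  rw [AddSubgroup.index_comap_of_surjective _ blockSumDiff_surjective, Int.index_zmultiples,
    Int.natAbs_natCast]
end
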